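/- The set S′∖S is empty if and only if 𝕀 is empty. -/

import Mathlib

namespace ProjMonomialCurve

/-- The numerical semigroup generated by `a 1, …, a k` (equivalently by `A₁ = {0,a 1,…,a k}`). -/
def S1 (k : ℕ) (a : ℕ → ℕ) : Set ℕ :=
  {n | ∃ x : ℕ → ℕ, n = ∑ i ∈ Finset.Icc 1 k, x i * a i}

/-- The numerical semigroup generated by the nonzero elements `d - a i` (`0 ≤ i ≤ k-1`)
of `A₂`, where `d = a k`. -/
def S2 (k : ℕ) (a : ℕ → ℕ) : Set ℕ :=
  {n | ∃ x : ℕ → ℕ, n = ∑ i ∈ Finset.range k, x i * (a k - a i)}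

/-- `δ₁ n`: least total number of summands over representations `n = ∑ xᵢ aᵢ`. -/
noncomputable def delta1 (k : ℕ) (a : ℕ → ℕ) (n : ℕ) : ℕ :=
  sInf {m | ∃ x : ℕ → ℕ, n = ∑ i ∈ Finset.Icc 1 k, x i * a i ∧ m = ∑ i ∈ Finset.Icc 1 k, x i}

/-- `δ₂ n`: least total number of summands over representations of `n` by the
nonzero elements of `A₂`. -/
noncomputable def delta2 (k : ℕ) (a : ℕ → ℕ) (n : ℕ) : ℕ :=
  sInf {m | ∃ x : ℕ → ℕ,
    n = ∑ i ∈ Finset.range k, x i * (a k - a i) ∧ m = ∑ i ∈ Finset.range k, x i}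

/-- `ω₁ i`: the least element of `S₍₁₎` congruent to `i` modulo `d = a k`. -/
noncomputable def omega1 (k : ℕ) (a : ℕ → ℕ) (i : ℕ) : ℕ :=
  sInf {n | n ∈ S1 k a ∧ n % a k = i % a k}

/-- `ω₂ i`: the least element of `S₍₂₎` congruent to `i` modulo `d = a k`. -/
noncomputable def omega2 (k : ℕ) (a : ℕ → ℕ) (i : ℕ) : ℕ :=
  sInf {n | n ∈ S2 k a ∧ n % a k = i % a k}

/-- `w i = (ω₁(i), ω₂(d-i))`. -/
noncomputable def w (k : ℕ) (a : ℕ → ℕ) (i : ℕ) : ℕ × ℕ :=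
  (omega1 k a i, omega2 k a (a k - i))

/-- `e h = (h, d - h)`. -/
def e (k : ℕ) (a : ℕ → ℕ) (h : ℕ) : ℕ × ℕ := (h, a k - h)

/-- The affine semigroup `S ⊆ ℕ²` generated by `e (a 0), …, e (a k)`. -/
def S (k : ℕ) (a : ℕ → ℕ) : Set (ℕ × ℕ) :=
  {u | ∃ x : ℕ → ℕ, u = ∑ i ∈ Finset.range (k+1), x i • e k a (a i)}

/-- `S' = {u ∈ ℕ² | u + p•e₀ ∈ S and u + p•e_d ∈ S for some p ∈ ℕ}`. -/
def S' (k : ℕ) (a : ℕ → ℕ) : Set (ℕ × ℕ) :=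
  {u | ∃ p : ℕ, u + p • e k a 0 ∈ S k a ∧ u + p • e k a (a k) ∈ S k a}

/-- `deg u = (u₁ + u₂)/d` for `u ∈ ℕ²`. -/
def deg (k : ℕ) (a : ℕ → ℕ) (u : ℕ × ℕ) : ℕ := (u.1 + u.2) / a k

/-- The index set `𝕀`. -/
noncomputable def II (k : ℕ) (a : ℕ → ℕ) : Set ℕ :=
  {i | 1 ≤ i ∧ i ≤ a k - 1 ∧ (∀ j, 1 ≤ j → j ≤ k - 1 → i ≠ a j) ∧
    deg k a (w k a i) < delta1 k a (w k a i).1}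

/-- `T = {u ∈ ℤ² | d ∣ u₁+u₂, u₁ ∉ S₍₁₎, u₂ ∉ S₍₂₎}`. -/
def T (k : ℕ) (a : ℕ → ℕ) : Set (ℤ × ℤ) :=
  {u | (a k : ℤ) ∣ u.1 + u.2 ∧ (∀ n ∈ S1 k a, (n : ℤ) ≠ u.1) ∧ (∀ n ∈ S2 k a, (n : ℤ) ≠ u.2)}

/-- `deg` for integer points. -/
def degZ (k : ℕ) (a : ℕ → ℕ) (u : ℤ × ℤ) : ℤ := (u.1 + u.2) / (a k : ℤ)

/-- The Castelnuovo–Mumford regularity, expressed combinatorially: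
`max({deg u + 1 : u ∈ S'∖S} ∪ {deg u + 2 : u ∈ T})`. -/
noncomputable def reg (k : ℕ) (a : ℕ → ℕ) : ℤ :=
  sSup ({z : ℤ | ∃ u ∈ S' k a \ S k a, z = (deg k a u : ℤ) + 1} ∪
        {z : ℤ | ∃ u ∈ T k a, z = degZ k a u + 2})

/-- Frobenius number of `S₍₁₎` (greatest integer not in it; `-1` if the semigroup is all of `ℕ`). -/
noncomputable def F1 (k : ℕ) (a : ℕ → ℕ) : ℤ :=
  sSup {z : ℤ | ∀ n ∈ S1 k a, (n : ℤ) ≠ z}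

/-- Frobenius number of `S₍₂₎`. -/
noncomputable def F2 (k : ℕ) (a : ℕ → ℕ) : ℤ :=
  sSup {z : ℤ | ∀ n ∈ S2 k a, (n : ℤ) ≠ z}

/-- The largest gap `λ_max = max_{1 ≤ i ≤ k} (a i - a (i-1) - 1)`. -/
def lamMax (k : ℕ) (a : ℕ → ℕ) : ℕ :=
  (Finset.Icc 1 k).sup (fun i => a i - a (i-1) - 1)

/-- The second largest gap: the minimum over `i` of the largest gap among indices `≠ i`. -/
noncomputable def lamSl (k : ℕ) (a : ℕ → ℕ) : ℕ :=
  sInf {m | ∃ i, 1 ≤ i ∧ i ≤ k ∧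
    m = ((Finset.Icc 1 k).erase i).sup (fun j => a j - a (j-1) - 1)}

/-- The set `A₁ = {a 0, a 1, …, a k}`. -/
def A1set (k : ℕ) (a : ℕ → ℕ) : Set ℕ := {m | ∃ j ≤ k, a j = m}

/-!
Write `d = a k`. Reading off coordinates, `u ∈ S'` iff `d ∣ u₁ + u₂`, `u₁ ∈ S₍₁₎` and
`u₂ ∈ S₍₂₎`, and such a `u` lies in `S` iff `δ₁(u₁) ≤ deg u`. The semigroup `S` is stable
under translation by `e₀ = (0, d)` and `e_d = (d, 0)`, and for `u ∈ S'` and `i = u₁ mod d` the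
difference `u - w_i` is a combination of these two vectors; so `u ∈ S' ∖ S` forces
`w_i ∈ S' ∖ S`. Finally, for `0 ≤ i < d` one has `w_i ∈ S' ∖ S` iff `i ∈ 𝕀`: the points
`w_0 = 0` and `w_{a_j} = e_{a_j}` lie in `S`, and for the other `i` the `δ₁` criterion applies.
-/

theorem _root_.Nat.ModEq.of_dvd_add {d n n' m m' : ℕ} (h : n ≡ n' [MOD d]) (hm : d ∣ n + m)
    (hm' : d ∣ n' + m') : m ≡ m' [MOD d] :=
  h.add_left_cancel <| (Nat.modEq_zero_iff_dvd.2 hm).trans (Nat.modEq_zero_iff_dvd.2 hm').symm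

theorem _root_.Finset.sum_range_succ_eq_add_sum_Icc {M : Type*} [AddCommMonoid M] (f : ℕ → M)
    (k : ℕ) :
    ∑ i ∈ Finset.range (k + 1), f i = f 0 + ∑ i ∈ Finset.Icc 1 k, f i := by
  rw [Finset.range_eq_Ico, Finset.sum_eq_sum_Ico_succ_bot k.succ_pos, zero_add,
    ← Finset.Ico_add_one_right_eq_Icc]
  rfl

theorem sInf_residue_mem {T : Set ℕ} {d i : ℕ} (h : ∃ n ∈ T, n ≡ i [MOD d]) :
    sInf {m | m ∈ T ∧ m % d = i % d} ∈ T ∧ sInf {m | m ∈ T ∧ m % d = i % d} ≡ i [MOD d] := by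
  obtain ⟨n, hn, hni⟩ := h
  exact Nat.sInf_mem (s := {m | m ∈ T ∧ m % d = i % d}) ⟨n, hn, hni⟩

theorem sInf_residue_eq {T : Set ℕ} {d i j : ℕ} (hi : i ∈ T) (hid : i < d) (hji : j ≡ i [MOD d]) :
    sInf {m | m ∈ T ∧ m % d = j % d} = i := by
  refine le_antisymm (Nat.sInf_le ⟨hi, hji.symm⟩) (le_csInf ⟨i, hi, hji.symm⟩ ?_)
  rintro m ⟨-, hm⟩
  calc i = j % d := by rw [hji, Nat.mod_eq_of_lt hid]
    _ = m % d := hm.symm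
    _ ≤ m := Nat.mod_le m d

section Semigroup

variable {k : ℕ} {a : ℕ → ℕ}

theorem fst_sum_smul_e (ha0 : a 0 = 0) (x : ℕ → ℕ) :
    (∑ i ∈ Finset.range (k + 1), x i • e k a (a i)).1 = ∑ i ∈ Finset.Icc 1 k, x i * a i := by
  rw [Prod.fst_sum, Finset.sum_range_succ_eq_add_sum_Icc]
  simp [e, ha0]

theorem snd_sum_smul_e (x : ℕ → ℕ) :
    (∑ i ∈ Finset.range (k + 1), x i • e k a (a i)).2
      = ∑ i ∈ Finset.range k, x i * (a k - a i) := by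
  rw [Prod.snd_sum, Finset.sum_range_succ]
  simp [e]

theorem fst_add_snd_sum_smul_e (hle : ∀ i ≤ k, a i ≤ a k) (x : ℕ → ℕ) :
    (∑ i ∈ Finset.range (k + 1), x i • e k a (a i)).1
      + (∑ i ∈ Finset.range (k + 1), x i • e k a (a i)).2
      = (∑ i ∈ Finset.range (k + 1), x i) * a k := by
  rw [Prod.fst_sum, Prod.snd_sum, ← Finset.sum_add_distrib, Finset.sum_mul]
  refine Finset.sum_congr rfl fun i hi => ?_
  simp only [e, Prod.smul_fst, Prod.smul_snd, smul_eq_mul, ← mul_add]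
  rw [Nat.add_sub_cancel' (hle i (Nat.lt_succ_iff.1 (Finset.mem_range.1 hi)))]

theorem add_mem_S {u v : ℕ × ℕ} (hu : u ∈ S k a) (hv : v ∈ S k a) : u + v ∈ S k a := by
  obtain ⟨x, rfl⟩ := hu
  obtain ⟨y, rfl⟩ := hv
  exact ⟨x + y, by simp [add_smul, Finset.sum_add_distrib]⟩

theorem smul_e_mem_S {j : ℕ} (hj : j ≤ k) (p : ℕ) : p • e k a (a j) ∈ S k a :=
  ⟨fun i => if i = j then p else 0, by
    simp [ite_smul, Finset.sum_ite_eq', Nat.lt_succ_iff.2 hj]⟩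

theorem fst_mem_S1 (ha0 : a 0 = 0) {v : ℕ × ℕ} (hv : v ∈ S k a) : v.1 ∈ S1 k a := by
  obtain ⟨x, rfl⟩ := hv
  exact ⟨x, fst_sum_smul_e ha0 x⟩

theorem snd_mem_S2 {v : ℕ × ℕ} (hv : v ∈ S k a) : v.2 ∈ S2 k a := by
  obtain ⟨x, rfl⟩ := hv
  exact ⟨x, snd_sum_smul_e x⟩

theorem dvd_fst_add_snd (hle : ∀ i ≤ k, a i ≤ a k) {v : ℕ × ℕ} (hv : v ∈ S k a) :
    a k ∣ v.1 + v.2 := by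
  obtain ⟨x, rfl⟩ := hv
  exact ⟨_, (fst_add_snd_sum_smul_e hle x).trans (mul_comm _ _)⟩

theorem delta1_fst_mul_le (ha0 : a 0 = 0) (hle : ∀ i ≤ k, a i ≤ a k) {v : ℕ × ℕ}
    (hv : v ∈ S k a) : delta1 k a v.1 * a k ≤ v.1 + v.2 := by
  obtain ⟨x, rfl⟩ := hv
  rw [fst_add_snd_sum_smul_e hle]
  gcongr
  calc delta1 k a _ ≤ ∑ i ∈ Finset.Icc 1 k, x i := Nat.sInf_le ⟨x, fst_sum_smul_e ha0 x, rfl⟩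
    _ ≤ ∑ i ∈ Finset.range (k + 1), x i := by rw [Finset.sum_range_succ_eq_add_sum_Icc]; omega

theorem exists_mem_S_fst_eq (ha0 : a 0 = 0) (hle : ∀ i ≤ k, a i ≤ a k) (x : ℕ → ℕ) :
    ∃ v ∈ S k a, v.1 = ∑ i ∈ Finset.Icc 1 k, x i * a i ∧
      v.1 + v.2 = (∑ i ∈ Finset.Icc 1 k, x i) * a k := by
  have hIcc (f : ℕ → ℕ) : ∑ i ∈ Finset.Icc 1 k, Function.update x 0 0 i * f i
      = ∑ i ∈ Finset.Icc 1 k, x i * f i :=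
    Finset.sum_congr rfl fun i hi => by
      rw [Function.update_of_ne (by have := (Finset.mem_Icc.1 hi).1; omega)]
  refine ⟨_, ⟨Function.update x 0 0, rfl⟩, by rw [fst_sum_smul_e ha0, hIcc], ?_⟩
  rw [fst_add_snd_sum_smul_e hle, Finset.sum_range_succ_eq_add_sum_Icc, Function.update_self,
    zero_add]
  simpa using congrArg (· * a k) (hIcc fun _ => 1)

theorem mem_S_of_fst_eq (ha0 : a 0 = 0) {u v : ℕ × ℕ} (hv : v ∈ S k a) (h1 : u.1 = v.1)
    (h2 : v.2 ≤ u.2) (hmod : v.2 ≡ u.2 [MOD a k]) : u ∈ S k a := by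
  obtain ⟨q, hq⟩ := (Nat.modEq_iff_dvd' h2).1 hmod
  have he := smul_e_mem_S (a := a) (Nat.zero_le k) q
  rw [ha0] at he
  convert add_mem_S hv he using 1
  ext
  · simp [e, h1]
  · simp only [e, Prod.snd_add, Prod.smul_snd, smul_eq_mul, Nat.sub_zero, mul_comm q]
    omega

theorem mem_S_of_snd_eq {u v : ℕ × ℕ} (hv : v ∈ S k a) (h2 : u.2 = v.2)
    (h1 : v.1 ≤ u.1) (hmod : v.1 ≡ u.1 [MOD a k]) : u ∈ S k a := by
  obtain ⟨q, hq⟩ := (Nat.modEq_iff_dvd' h1).1 hmod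
  convert add_mem_S hv (smul_e_mem_S (a := a) le_rfl q) using 1
  ext
  · simp only [e, Prod.fst_add, Prod.smul_fst, smul_eq_mul, mul_comm q]
    omega
  · simp [e, h2]

theorem mem_S'_iff (ha0 : a 0 = 0) (hle : ∀ i ≤ k, a i ≤ a k) (hd : 0 < a k) (u : ℕ × ℕ) :
    u ∈ S' k a ↔ a k ∣ u.1 + u.2 ∧ u.1 ∈ S1 k a ∧ u.2 ∈ S2 k a := by
  constructor
  · rintro ⟨p, hp₀, hp_d⟩
    have hdvd := dvd_fst_add_snd hle hp₀
    refine ⟨?_, by simpa [e] using fst_mem_S1 ha0 hp₀, by simpa [e] using snd_mem_S2 hp_d⟩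
    exact (Nat.dvd_add_left (dvd_mul_left (a k) p)).1 (by simpa [e, ← add_assoc] using hdvd)
  · rintro ⟨hdvd, ⟨x, hx⟩, ⟨y, hy⟩⟩
    obtain ⟨v, hv, hv1, -⟩ := exists_mem_S_fst_eq ha0 hle x
    have hv' : ∑ i ∈ Finset.range (k + 1), y i • e k a (a i) ∈ S k a := ⟨y, rfl⟩
    set v' := ∑ i ∈ Finset.range (k + 1), y i • e k a (a i)
    have hv'2 : v'.2 = u.2 := by rw [hy, snd_sum_smul_e]
    have hp : v.2 + v'.1 ≤ (v.2 + v'.1) * a k := Nat.le_mul_of_pos_right _ hd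
    refine ⟨v.2 + v'.1, mem_S_of_fst_eq ha0 hv (by simp [e, hx, hv1]) ?_ ?_,
      mem_S_of_snd_eq hv' (by simp [e, hv'2]) ?_ ?_⟩
    · simp only [e, Prod.snd_add, Prod.smul_snd, smul_eq_mul, Nat.sub_zero]
      omega
    · simp only [e, Prod.snd_add, Prod.smul_snd, smul_eq_mul, Nat.sub_zero]
      exact (Nat.ModEq.of_dvd_add (by rw [hv1, hx]) (dvd_fst_add_snd hle hv) hdvd).trans
        (Nat.add_mul_mod_self_right _ _ _).symm
    · simp only [e, Prod.fst_add, Prod.smul_fst, smul_eq_mul]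
      omega
    · simp only [e, Prod.fst_add, Prod.smul_fst, smul_eq_mul]
      refine (Nat.ModEq.of_dvd_add (n := v'.2) (n' := u.2) (by rw [hv'2]) ?_ ?_).trans
        (Nat.add_mul_mod_self_right _ _ _).symm
      · rw [add_comm]; exact dvd_fst_add_snd hle hv'
      · rwa [add_comm]

theorem mem_S_iff_delta1_le (ha0 : a 0 = 0) (hle : ∀ i ≤ k, a i ≤ a k) (hd : 0 < a k)
    {u : ℕ × ℕ} (hdvd : a k ∣ u.1 + u.2) (h1 : u.1 ∈ S1 k a) :
    u ∈ S k a ↔ delta1 k a u.1 ≤ deg k a u := by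
  have hdeg : u.1 + u.2 = deg k a u * a k := (Nat.div_mul_cancel hdvd).symm
  constructor
  · intro hu
    exact Nat.le_of_mul_le_mul_right (hdeg ▸ delta1_fst_mul_le ha0 hle hu) hd
  · intro hδ
    obtain ⟨x, hx⟩ := h1
    obtain ⟨y, hy, hδy⟩ := Nat.sInf_mem (s := {m | ∃ x : ℕ → ℕ,
      u.1 = ∑ i ∈ Finset.Icc 1 k, x i * a i ∧ m = ∑ i ∈ Finset.Icc 1 k, x i}) ⟨_, x, hx, rfl⟩
    obtain ⟨v, hv, hv1, hv12⟩ := exists_mem_S_fst_eq ha0 hle y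
    have hle_deg : v.1 + v.2 ≤ u.1 + u.2 := by
      rw [hv12, hdeg, ← hδy]
      exact Nat.mul_le_mul_right _ hδ
    refine mem_S_of_fst_eq ha0 hv (hy.trans hv1.symm) (by omega) ?_
    exact Nat.ModEq.of_dvd_add (by rw [hv1, hy]) (dvd_fst_add_snd hle hv) hdvd

end Semigroup

section Apery

variable {k : ℕ} {a : ℕ → ℕ}

theorem w_mem_S' (ha0 : a 0 = 0) (hle : ∀ i ≤ k, a i ≤ a k) (hd : 0 < a k) {i : ℕ}
    (hi : i ≤ a k) (h : ∃ n ∈ S1 k a, n ≡ i [MOD a k]) : w k a i ∈ S' k a := by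
  have hdi : a k ∣ i + (a k - i) := by rw [Nat.add_sub_cancel' hi]
  obtain ⟨hω₁, hω₁i⟩ := sInf_residue_mem h
  obtain ⟨x, hx⟩ := hω₁
  obtain ⟨v, hv, hv1, -⟩ := exists_mem_S_fst_eq ha0 hle x
  -- a point of `S` over `ω₁(i)` supplies an element of `S₍₂₎` congruent to `d - i`
  have hv2 : v.2 ≡ a k - i [MOD a k] :=
    Nat.ModEq.of_dvd_add (by rw [hv1, ← hx]; exact hω₁i) (dvd_fst_add_snd hle hv) hdi
  obtain ⟨hω₂, hω₂i⟩ := sInf_residue_mem ⟨v.2, snd_mem_S2 hv, hv2⟩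
  refine (mem_S'_iff ha0 hle hd _).2 ⟨?_, ⟨x, hx⟩, hω₂⟩
  exact Nat.modEq_zero_iff_dvd.1 ((hω₁i.add hω₂i).trans (Nat.modEq_zero_iff_dvd.2 hdi))

theorem w_zero_mem_S (hd : 0 < a k) : w k a 0 ∈ S k a := by
  have hω₁ : omega1 k a 0 = 0 := sInf_residue_eq ⟨0, by simp⟩ hd rfl
  have hω₂ : omega2 k a (a k - 0) = 0 := sInf_residue_eq ⟨0, by simp⟩ hd (by simp [Nat.ModEq])
  rw [show w k a 0 = 0 from Prod.ext hω₁ hω₂]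
  exact ⟨0, by simp⟩

theorem w_apply_mem_S (ha0 : a 0 = 0) {j : ℕ} (hj : j ≤ k)
    (haj : 0 < a j) (hajk : a j < a k) : w k a (a j) ∈ S k a := by
  have he : e k a (a j) ∈ S k a := one_smul ℕ (e k a (a j)) ▸ smul_e_mem_S hj 1
  have hω₁ : omega1 k a (a j) = a j := sInf_residue_eq (fst_mem_S1 ha0 he) hajk rfl
  have hω₂ : omega2 k a (a k - a j) = a k - a j :=
    sInf_residue_eq (snd_mem_S2 he) (by omega) rfl
  rwa [show w k a (a j) = e k a (a j) from Prod.ext hω₁ hω₂]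

theorem mem_II_iff (ha0 : a 0 = 0) (hle : ∀ i ≤ k, a i ≤ a k) {i : ℕ} (hi : i < a k) :
    i ∈ II k a ↔ w k a i ∈ S' k a \ S k a := by
  have hd : 0 < a k := by omega
  constructor
  · rintro ⟨-, -, -, hδ⟩
    have hne : ∃ n ∈ S1 k a, n ≡ i [MOD a k] := by
      by_contra hne
      have hω : (w k a i).1 = 0 := Nat.sInf_eq_zero.2 <| Or.inr <|
        Set.eq_empty_iff_forall_notMem.2 fun n hn => hne ⟨n, hn⟩
      have hδ₀ : delta1 k a 0 = 0 := Nat.eq_zero_of_le_zero (Nat.sInf_le ⟨0, by simp, by simp⟩)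
      rw [hω, hδ₀] at hδ
      exact Nat.not_lt_zero _ hδ
    have hS' := w_mem_S' ha0 hle hd hi.le hne
    obtain ⟨hdvd, h1, -⟩ := (mem_S'_iff ha0 hle hd _).1 hS'
    exact ⟨hS', fun hS => ((mem_S_iff_delta1_le ha0 hle hd hdvd h1).1 hS).not_gt hδ⟩
  · rintro ⟨hS', hS⟩
    obtain ⟨hdvd, h1, -⟩ := (mem_S'_iff ha0 hle hd _).1 hS'
    have hi0 : 0 < i := Nat.pos_of_ne_zero fun h => hS (h ▸ w_zero_mem_S hd)
    refine ⟨hi0, by omega, ?_, not_le.1 fun h => hS ((mem_S_iff_delta1_le ha0 hle hd hdvd h1).2 h)⟩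
    rintro j - hj rfl
    exact hS (w_apply_mem_S ha0 (by omega) hi0 hi)

theorem w_mem_diff_of_mem_diff (ha0 : a 0 = 0) (hle : ∀ i ≤ k, a i ≤ a k) (hd : 0 < a k)
    {u : ℕ × ℕ} (hu : u ∈ S' k a \ S k a) : w k a (u.1 % a k) ∈ S' k a \ S k a := by
  obtain ⟨hdvd, h1, h2⟩ := (mem_S'_iff ha0 hle hd _).1 hu.1
  set i := u.1 % a k
  have hi : i ≤ a k := (Nat.mod_lt _ hd).le
  have hu1 : u.1 ≡ i [MOD a k] := (Nat.mod_modEq _ _).symm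
  have hu2 : u.2 ≡ a k - i [MOD a k] :=
    Nat.ModEq.of_dvd_add hu1 hdvd (by rw [Nat.add_sub_cancel' hi])
  have hω₁ := sInf_residue_mem ⟨u.1, h1, hu1⟩
  have hω₂ := sInf_residue_mem ⟨u.2, h2, hu2⟩
  refine ⟨w_mem_S' ha0 hle hd hi ⟨u.1, h1, hu1⟩, fun hS => hu.2 ?_⟩
  have hS₁ : (u.1, (w k a i).2) ∈ S k a :=
    mem_S_of_snd_eq hS rfl (Nat.sInf_le ⟨h1, hu1⟩) (hω₁.2.trans hu1.symm)
  exact mem_S_of_fst_eq ha0 hS₁ rfl (Nat.sInf_le ⟨h2, hu2⟩) (hω₂.2.trans hu2.symm)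

end Apery

theorem statement_2_general (k : ℕ) (a : ℕ → ℕ) (hk : 3 ≤ k) (ha0 : a 0 = 0)
    (hmono : ∀ i, i < k → a i < a (i+1)) :
    S' k a \ S k a = ∅ ↔ II k a = ∅ := by
  have hmono' : StrictMonoOn a (Set.Iic k) := strictMonoOn_Iic_of_lt_succ fun m hm => by
    simpa [Order.succ_eq_add_one] using hmono m hm
  have hle : ∀ i ≤ k, a i ≤ a k := fun i hi => hmono'.monotoneOn hi (Set.mem_Iic.2 le_rfl) hi
  have hd : 0 < a k := ha0 ▸ hmono' (Set.mem_Iic.2 k.zero_le) (Set.mem_Iic.2 le_rfl) (by omega)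
  simp only [Set.eq_empty_iff_forall_notMem]
  constructor
  · intro h i hi
    exact h _ ((mem_II_iff ha0 hle (by have := hi.1; have := hi.2.1; omega)).1 hi)
  · intro h u hu
    exact h _ ((mem_II_iff ha0 hle (Nat.mod_lt _ hd)).2 (w_mem_diff_of_mem_diff ha0 hle hd hu))

theorem statement_2 (k : ℕ) (a : ℕ → ℕ) (hk : 3 ≤ k) (ha0 : a 0 = 0)
    (hmono : ∀ i, i < k → a i < a (i+1)) (hgcd : (Finset.Icc 1 k).gcd a = 1) :
    S' k a \ S k a = ∅ ↔ II k a = ∅ :=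
  statement_2_general k a hk ha0 hmono

end ProjMonomialCurve
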